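/- For every natural number N ≥ 1 and every n ≥ 1, there exists an n-admissible path in the BUFF transition system containing exactly n 'in'-steps, at most n−1 'out'-steps and exactly 4n ticks. -/

import Mathlib

/-- Labels of steps in the BUFF transition system. -/
inductive BLabel : Type
  | tick | ins | write | read | outs
deriving DecidableEq

/-- States of the BUFF transition system: `(x, y, m, u)` where `x, y ∈ {0,1}` are the
input/output flags of the buffer controller (encoded as `Bool`), `m ∈ {0, …, N}` is the
number of values in the storage, and `u` is an urgency flag (`true` = urgent). -/
abbrev BState : Type := Bool × Bool × ℕ × Bool

/-- Steps of the BUFF transition system (storage of `N` circularly used cells). -/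
inductive BStep (N : ℕ) : BState → BLabel → BState → Prop
  | tick (x y : Bool) (m : ℕ) : BStep N (x, y, m, false) BLabel.tick (x, y, m, true)
  | ins (y : Bool) (m : ℕ) (u : Bool) :
      BStep N (false, y, m, u) BLabel.ins (true, y, m, false)
  | write (y : Bool) (m : ℕ) (u : Bool) (h : m < N) :
      BStep N (true, y, m, u) BLabel.write (false, y, m + 1, false)
  | read (x : Bool) (m : ℕ) (u : Bool) (h : 0 < m) :
      BStep N (x, false, m, u) BLabel.read (x, true, m - 1, false)
  | outs (x : Bool) (m : ℕ) (u : Bool) :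
      BStep N (x, true, m, u) BLabel.outs (x, false, m, false)

/-- `BPath N s ls` : `ls` is the sequence of labels of a finite path of consecutive
steps starting in state `s`. -/
inductive BPath (N : ℕ) : BState → List BLabel → Prop
  | nil (s : BState) : BPath N s []
  | cons {s s' : BState} {l : BLabel} {ls : List BLabel} :
      BStep N s l s' → BPath N s' ls → BPath N s (l :: ls)

/-- A path of the BUFF system: a path starting in the initial state `(0, 0, 0, relaxed)`. -/
def BuffPath (N : ℕ) (ls : List BLabel) : Prop := BPath N (false, false, 0, false) ls

/-- An `n`-admissible path of the BUFF system: at most `n` `in`-steps and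
at most `n - 1` `out`-steps. -/
def BuffAdmissible (N n : ℕ) (ls : List BLabel) : Prop :=
  BuffPath N ls ∧ ls.count BLabel.ins ≤ n ∧ ls.count BLabel.outs ≤ n - 1

/-- The response performance of the BUFF buffer: the supremum (in `ℕ∞`) of the
number of ticks over all `n`-admissible paths. -/
noncomputable def rpBuff (N n : ℕ) : ℕ∞ :=
  sSup {k : ℕ∞ | ∃ ls : List BLabel, BuffAdmissible N n ls ∧ (ls.count BLabel.tick : ℕ∞) = k}

/-!
The buffer can pass one value through with a tick before each of its four actions
`in`, `write`, `read`, `out`: every action makes the state relaxed again, so each may be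
preceded by a tick, and the storage returns to its previous content. Running `n - 1` such
cycles and then a last one that stops before its `out`-step gives `n` `in`-steps,
`n - 1` `out`-steps and `4 n` ticks.
-/

def serveCycle : List BLabel := [.tick, .ins, .tick, .write, .tick, .read, .tick]

def fullCycle : List BLabel := serveCycle ++ [.outs]

def tickWitness (k : ℕ) : List BLabel := (List.replicate k fullCycle).flatten ++ serveCycle

section

variable {N m : ℕ}

lemma BPath.serveCycle_append (hm : m < N) {ls : List BLabel}
    (h : BPath N (false, true, m, true) ls) :
    BPath N (false, false, m, false) (serveCycle ++ ls) :=
  .cons (.tick _ _ _) <| .cons (.ins _ _ _) <| .cons (.tick _ _ _) <| .cons (.write _ _ _ hm) <|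
    .cons (.tick _ _ _) <| .cons (.read _ _ _ m.succ_pos) <| .cons (.tick _ _ _) h

lemma BPath.fullCycle_append (hm : m < N) {ls : List BLabel}
    (h : BPath N (false, false, m, false) ls) :
    BPath N (false, false, m, false) (fullCycle ++ ls) := by
  rw [fullCycle, List.append_assoc]
  exact serveCycle_append hm (.cons (.outs _ _ _) h)

lemma bPath_tickWitness (hm : m < N) (k : ℕ) :
    BPath N (false, false, m, false) (tickWitness k) := by
  induction k with
  | zero => exact .serveCycle_append hm (.nil _)
  | succ k ih =>
    rw [tickWitness, List.replicate_succ, List.flatten_cons, List.append_assoc]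
    exact .fullCycle_append hm ih

end

lemma count_tickWitness (a : BLabel) (k : ℕ) :
    (tickWitness k).count a = k * fullCycle.count a + serveCycle.count a := by
  simp [tickWitness, List.count_flatten, List.sum_replicate]

/-- For every `N ≥ 1` and `n ≥ 1`, there exists an `n`-admissible path in the BUFF
transition system containing exactly `n` `in`-steps, at most `n - 1` `out`-steps and
exactly `4n` ticks. -/
theorem buff_ticks_attained (N n : ℕ) (hN : 1 ≤ N) (hn : 1 ≤ n) :
    ∃ ls : List BLabel, BuffAdmissible N n ls ∧
      ls.count BLabel.ins = n ∧ ls.count BLabel.outs ≤ n - 1 ∧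
      ls.count BLabel.tick = 4 * n := by
  obtain ⟨k, rfl⟩ := Nat.exists_eq_add_of_le' hn
  have hins : (tickWitness k).count .ins = k + 1 := by
    simp [count_tickWitness, fullCycle, serveCycle]
  have houts : (tickWitness k).count .outs = k := by
    simp [count_tickWitness, fullCycle, serveCycle]
  have hticks : (tickWitness k).count .tick = 4 * (k + 1) := by
    simp [count_tickWitness, fullCycle, serveCycle, add_mul, mul_comm]
  refine ⟨tickWitness k, ⟨bPath_tickWitness hN k, ?_, ?_⟩, hins, ?_, hticks⟩ <;> omega
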